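/- arXiv:1810.12344 — 2 statements merged into one kernel-verified Lean document; each statement's English description precedes it below -/
import Mathlib

section
/- For every ε > 0 and every integer j ≥ 1, there is a constant C(ε, j) such that for all Q ≥ 1, ∑_{q₁=1}^{Q} ... ∑_{q_j=1}^{Q} 1 / lcm(q₁, ..., q_j) ≤ C(ε, j) · Q^{ε}. -/
/-! Every tuple with `lcm q = r` consists of divisors of `r`, and `r ∣ ∏ qᵢ ≤ Q ^ j`, so the sum
is at most `∑_{r ≤ Q ^ j} d(r) ^ j / r`. With `d(r) ≤ C_δ r ^ δ` and
`∑_{r ≤ N} 1 / r ≤ 1 + log N ≪_δ N ^ δ` this is `≪ Q ^ ((j + 1) ^ 2 δ)`; take `δ = ε / (j + 1) ^ 2`.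
-/

open Finset

lemma succ_le_div_sub_one_mul_pow {x y : ℝ} (hy : 1 < y) (hyx : y ≤ x) (k : ℕ) :
    (k + 1 : ℝ) ≤ y / (y - 1) * x ^ k := by
  have hy1 : 0 < y - 1 := by linarith
  have bernoulli : 1 + k * (y - 1) ≤ y ^ k := by
    simpa using one_add_mul_le_pow (by linarith : -2 ≤ y - 1) k
  have one_le : 1 ≤ y / (y - 1) := by rw [le_div_iff₀ hy1]; linarith
  calc (k + 1 : ℝ) ≤ y / (y - 1) + k * y := by nlinarith [k.cast_nonneg (α := ℝ)]
    _ = y / (y - 1) * (1 + k * (y - 1)) := by field_simp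
    _ ≤ y / (y - 1) * x ^ k := by gcongr; exact bernoulli.trans (by gcongr)

lemma succ_le_pow_of_two_le {x : ℝ} (hx : 2 ≤ x) (k : ℕ) : (k + 1 : ℝ) ≤ x ^ k :=
  calc (k + 1 : ℝ) ≤ 2 ^ k := by exact_mod_cast Nat.lt_two_pow_self
    _ ≤ x ^ k := by gcongr

lemma Nat.rpow_eq_prod_primeFactors {n : ℕ} (hn : n ≠ 0) (δ : ℝ) :
    (n : ℝ) ^ δ = ∏ p ∈ n.primeFactors, ((p : ℝ) ^ δ) ^ n.factorization p := by
  conv_lhs => rw [Nat.prod_primeFactors_pow_factorization hn]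
  push_cast
  rw [← Real.finsetProd_rpow _ _ (fun p _ => by positivity)]
  exact prod_congr rfl fun p _ => (Real.rpow_pow_comm p.cast_nonneg δ _).symm

theorem Nat.exists_card_divisors_le_mul_rpow {δ : ℝ} (hδ : 0 < δ) :
    ∃ C : ℝ, 0 < C ∧ ∀ n : ℕ, n ≠ 0 → (#n.divisors : ℝ) ≤ C * (n : ℝ) ^ δ := by
  have hy : 1 < (2 : ℝ) ^ δ := Real.one_lt_rpow (by norm_num) hδ
  set B := (2 : ℝ) ^ δ / ((2 : ℝ) ^ δ - 1)
  have hB : 1 ≤ B := by rw [le_div_iff₀ (by linarith)]; linarith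
  -- `d(n) / n ^ δ = ∏ (k + 1) / (p ^ δ) ^ k` over `p ^ k ∥ n`: a factor is `≤ 1` once `p ^ δ ≥ 2`,
  -- i.e. for `p > M`, and `≤ B` by Bernoulli's inequality for the at most `M + 1` smaller primes.
  set M := ⌈(2 : ℝ) ^ δ⁻¹⌉₊
  refine ⟨B ^ (M + 1), by positivity, fun n hn => ?_⟩
  have local_bound : ∀ p ∈ n.primeFactors, ((n.factorization p + 1 : ℕ) : ℝ) ≤
      (if p ≤ M then B else 1) * ((p : ℝ) ^ δ) ^ n.factorization p := by
    intro p hp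
    have hp2 : (2 : ℝ) ≤ p := by exact_mod_cast (Nat.prime_of_mem_primeFactors hp).two_le
    push_cast
    split_ifs with hpM
    · exact succ_le_div_sub_one_mul_pow hy (by gcongr) _
    · rw [one_mul]
      refine succ_le_pow_of_two_le ?_ _
      calc (2 : ℝ) = ((2 : ℝ) ^ δ⁻¹) ^ δ := (Real.rpow_inv_rpow (by norm_num) hδ.ne').symm
        _ ≤ (p : ℝ) ^ δ := by
          gcongr
          exact (Nat.le_ceil _).trans (by exact_mod_cast (not_le.mp hpM).le)
  have small_primes : #{p ∈ n.primeFactors | p ≤ M} ≤ M + 1 :=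
    (card_le_card fun p hp => mem_range.mpr (Nat.lt_succ_of_le (mem_filter.mp hp).2)).trans
      (card_range _).le
  calc (#n.divisors : ℝ) = ∏ p ∈ n.primeFactors, ((n.factorization p + 1 : ℕ) : ℝ) := by
        rw [Nat.card_divisors hn, Nat.cast_prod]
    _ ≤ ∏ p ∈ n.primeFactors, (if p ≤ M then B else 1) * ((p : ℝ) ^ δ) ^ n.factorization p :=
        prod_le_prod (fun _ _ => by positivity) local_bound
    _ = B ^ #{p ∈ n.primeFactors | p ≤ M} * (n : ℝ) ^ δ := by
        rw [prod_mul_distrib, prod_ite, prod_const, prod_const_one, mul_one,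
          Nat.rpow_eq_prod_primeFactors hn]
    _ ≤ B ^ (M + 1) * (n : ℝ) ^ δ := by gcongr

variable {ι : Type*} [Fintype ι] [DecidableEq ι]

lemma lcm_mem_Icc_of_mem_piFinset {Q : ℕ} {q : ι → ℕ}
    (hq : q ∈ Fintype.piFinset fun _ => Icc 1 Q) :
    univ.lcm q ∈ Icc 1 (Q ^ Fintype.card ι) := by
  have hqi : ∀ i, q i ∈ Icc 1 Q := Fintype.mem_piFinset.mp hq
  have hprod_pos : 0 < ∏ i, q i := prod_pos fun i _ => (mem_Icc.mp (hqi i)).1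
  have hdvd : univ.lcm q ∣ ∏ i, q i := lcm_dvd fun i hi => dvd_prod_of_mem q hi
  refine mem_Icc.mpr ⟨Nat.pos_of_dvd_of_pos hdvd hprod_pos, ?_⟩
  calc univ.lcm q ≤ ∏ i, q i := Nat.le_of_dvd hprod_pos hdvd
    _ ≤ Q ^ Fintype.card ι := prod_le_pow_card _ _ _ fun i _ => (mem_Icc.mp (hqi i)).2

lemma card_filter_lcm_eq_le (P : Finset (ι → ℕ)) {r : ℕ} (hr : r ≠ 0) :
    #{q ∈ P | univ.lcm q = r} ≤ #r.divisors ^ Fintype.card ι := by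
  calc #{q ∈ P | univ.lcm q = r} ≤ #(Fintype.piFinset fun _ : ι => r.divisors) := by
        refine card_le_card fun q hq => Fintype.mem_piFinset.mpr fun i => ?_
        rw [Nat.mem_divisors, ← (mem_filter.mp hq).2]
        exact ⟨dvd_lcm (mem_univ i), by rw [(mem_filter.mp hq).2]; exact hr⟩
    _ = #r.divisors ^ Fintype.card ι := by simp

lemma sum_one_div_lcm_le_sum_card_divisors_pow (Q : ℕ) :
    ∑ q ∈ Fintype.piFinset (fun _ : ι => Icc 1 Q), (1 : ℝ) / (univ.lcm q : ℕ) ≤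
      ∑ r ∈ Icc 1 (Q ^ Fintype.card ι), (#r.divisors : ℝ) ^ Fintype.card ι / r := by
  rw [← sum_fiberwise_of_maps_to fun q hq => lcm_mem_Icc_of_mem_piFinset hq]
  refine sum_le_sum fun r hr => ?_
  have hr0 : r ≠ 0 := Nat.one_le_iff_ne_zero.mp (mem_Icc.mp hr).1
  rw [sum_congr rfl fun q hq => by rw [(mem_filter.mp hq).2], sum_const, nsmul_eq_mul,
    mul_one_div]
  gcongr
  exact_mod_cast card_filter_lcm_eq_le _ hr0

lemma sum_Icc_inv_le_rpow {η : ℝ} (hη : 0 < η) {N : ℕ} (hN : N ≠ 0) :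
    ∑ r ∈ Icc 1 N, (r : ℝ)⁻¹ ≤ (1 + 1 / η) * (N : ℝ) ^ η := by
  have h1 : (1 : ℝ) ≤ (N : ℝ) ^ η :=
    Real.one_le_rpow (by exact_mod_cast Nat.one_le_iff_ne_zero.mpr hN) hη.le
  calc ∑ r ∈ Icc 1 N, (r : ℝ)⁻¹ = harmonic N := by simp [harmonic_eq_sum_Icc]
    _ ≤ 1 + Real.log N := harmonic_le_one_add_log N
    _ ≤ (N : ℝ) ^ η + (N : ℝ) ^ η / η := add_le_add h1 (Real.log_le_rpow_div N.cast_nonneg hη)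
    _ = (1 + 1 / η) * (N : ℝ) ^ η := by ring

lemma sum_one_div_lcm_le_rpow {A δ : ℝ} (hA : 0 ≤ A) (hδ : 0 < δ)
    (hd : ∀ n : ℕ, n ≠ 0 → (#n.divisors : ℝ) ≤ A * (n : ℝ) ^ δ) {Q : ℕ} (hQ : 1 ≤ Q) :
    ∑ q ∈ Fintype.piFinset (fun _ : ι => Icc 1 Q), (1 : ℝ) / (univ.lcm q : ℕ) ≤
      A ^ Fintype.card ι * (1 + 1 / δ) * ((Q : ℝ) ^ δ) ^ (Fintype.card ι + 1) ^ 2 := by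
  set k := Fintype.card ι
  set N := Q ^ k
  have hN : N ≠ 0 := pow_ne_zero _ (by omega)
  have hNQ : (N : ℝ) ^ δ ≤ ((Q : ℝ) ^ δ) ^ (k + 1) := by
    rw [Real.rpow_pow_comm (Nat.cast_nonneg Q)]
    gcongr
    exact_mod_cast Nat.pow_le_pow_right hQ k.le_succ
  calc _ ≤ ∑ r ∈ Icc 1 N, (#r.divisors : ℝ) ^ k / r :=
        sum_one_div_lcm_le_sum_card_divisors_pow Q
    _ ≤ ∑ r ∈ Icc 1 N, (A * (N : ℝ) ^ δ) ^ k * (r : ℝ)⁻¹ := by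
        refine sum_le_sum fun r hr => ?_
        rw [div_eq_mul_inv]
        gcongr
        exact (hd r (by grind)).trans (by gcongr; exact (mem_Icc.mp hr).2)
    _ ≤ (A * (N : ℝ) ^ δ) ^ k * ((1 + 1 / δ) * (N : ℝ) ^ δ) := by
        rw [← mul_sum]; gcongr; exact sum_Icc_inv_le_rpow hδ hN
    _ = A ^ k * (1 + 1 / δ) * ((N : ℝ) ^ δ) ^ (k + 1) := by ring
    _ ≤ A ^ k * (1 + 1 / δ) * ((Q : ℝ) ^ δ) ^ (k + 1) ^ 2 := by
        rw [sq, pow_mul]; gcongr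

theorem stmt_7_general (ε : ℝ) (hε : 0 < ε) (j : ℕ) :
    ∃ C : ℝ, 0 < C ∧ ∀ Q : ℕ, 1 ≤ Q →
      (∑ q ∈ Fintype.piFinset (fun _ : Fin j => Finset.Icc 1 Q),
          (1 : ℝ) / (Finset.univ.lcm q : ℕ)) ≤ C * (Q : ℝ) ^ ε := by
  set δ := ε / ((j : ℝ) + 1) ^ 2
  have hδ : 0 < δ := by positivity
  obtain ⟨A, hA, hd⟩ := Nat.exists_card_divisors_le_mul_rpow hδ
  refine ⟨A ^ j * (1 + 1 / δ), by positivity, fun Q hQ => ?_⟩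
  have key := sum_one_div_lcm_le_rpow (ι := Fin j) hA.le hδ hd hQ
  rwa [Fintype.card_fin, ← Real.rpow_mul_natCast (Nat.cast_nonneg _), Nat.cast_pow, Nat.cast_succ,
    div_mul_cancel₀ _ (by positivity)] at key

theorem stmt_7 (ε : ℝ) (hε : 0 < ε) (j : ℕ) (hj : 1 ≤ j) :
    ∃ C : ℝ, 0 < C ∧ ∀ Q : ℕ, 1 ≤ Q →
      (∑ q ∈ Fintype.piFinset (fun _ : Fin j => Finset.Icc 1 Q),
          (1 : ℝ) / (Finset.univ.lcm q : ℕ)) ≤ C * (Q : ℝ) ^ ε :=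
  stmt_7_general ε hε j
end

section
/- Let Q ≥ 1 be an integer, let a' be an integer with 0 ≤ a' < Q, and let ℓ' ∈ (ℤ/Qℤ)^d. Set ρ = gcd(a', gcd of the coordinates of ℓ', Q). Then the normalized Gauss sum satisfies G(a', ℓ', Q) = G(a'/ρ, ℓ'/ρ, Q/ρ), where G(a, ℓ, q) = q^{-d} ∑_{n ∈ (ℤ/qℤ)^d} e^{2πi (a|n|² + n·ℓ)/q}. -/
/-- The normalized Gauss sum
`G(a, ℓ, q) = q^{-d} ∑_{n ∈ (ℤ/qℤ)^d} e^{2πi (a|n|² + n·ℓ)/q}`. -/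
noncomputable def normGaussSum (d q : ℕ) (a : ℤ) (ℓ : Fin d → ℤ) : ℂ :=
  ((q : ℂ) ^ d)⁻¹ * ∑ n ∈ Fintype.piFinset (fun _ : Fin d => Finset.range q),
    Complex.exp (2 * (Real.pi : ℂ) * Complex.I *
      (((a * ∑ i, ((n i : ℤ)) ^ 2 + ∑ i, (n i : ℤ) * ℓ i : ℤ) : ℂ)) / (q : ℂ))

private lemma shift_eq {M : Type*} (g : ℕ → M) (q : ℕ) (hg : ∀ x, g (x + q) = g x) :
    ∀ k x, g (x + k * q) = g x := by
  intro k
  induction k with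
  | zero => simp
  | succ k ih =>
    intro x
    rw [Nat.succ_mul, ← Nat.add_assoc, hg, ih]

private lemma sum_periodic {M : Type*} [AddCommMonoid M] (g : ℕ → M) (q k : ℕ)
    (hg : ∀ x, g (x + q) = g x) :
    ∑ x ∈ Finset.range (k * q), g x = k • ∑ x ∈ Finset.range q, g x := by
  induction k with
  | zero => simp
  | succ k ih =>
    rw [Nat.succ_mul, Finset.sum_range_add, ih, succ_nsmul]
    congr 1
    refine Finset.sum_congr rfl fun x _ => ?_
    rw [Nat.add_comm, shift_eq g q hg k x]

private lemma gauss_prod (d q : ℕ) (A : ℤ) (L : Fin d → ℤ) :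
    ∑ n ∈ Fintype.piFinset (fun _ : Fin d => Finset.range q),
      Complex.exp (2 * (Real.pi : ℂ) * Complex.I *
        (((A * ∑ i, ((n i : ℤ)) ^ 2 + ∑ i, (n i : ℤ) * L i : ℤ) : ℂ)) / (q : ℂ))
    = ∏ i, ∑ x ∈ Finset.range q,
        Complex.exp (2 * (Real.pi : ℂ) * Complex.I *
          (((A * (x : ℤ) ^ 2 + (x : ℤ) * L i : ℤ) : ℂ)) / (q : ℂ)) := by
  rw [Finset.prod_univ_sum]
  refine Finset.sum_congr rfl fun n _ => ?_
  rw [← Complex.exp_sum]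
  congr 1
  rw [← Finset.sum_div, ← Finset.mul_sum]
  congr 2
  push_cast
  rw [Finset.mul_sum, ← Finset.sum_add_distrib]

private lemma sum_scale (ρ q' : ℕ) (hρ : 0 < ρ) (hq' : 0 < q') (A L : ℤ) :
    ∑ x ∈ Finset.range (ρ * q'),
      Complex.exp (2 * (Real.pi : ℂ) * Complex.I *
        ((((ρ : ℤ) * A) * (x : ℤ) ^ 2 + (x : ℤ) * ((ρ : ℤ) * L) : ℤ) : ℂ) / ((ρ * q' : ℕ) : ℂ))
    = (ρ : ℂ) * ∑ x ∈ Finset.range q',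
      Complex.exp (2 * (Real.pi : ℂ) * Complex.I *
        ((A * (x : ℤ) ^ 2 + (x : ℤ) * L : ℤ) : ℂ) / ((q' : ℕ) : ℂ)) := by
  have hρC : (ρ : ℂ) ≠ 0 := Nat.cast_ne_zero.mpr hρ.ne'
  have hqC : (q' : ℂ) ≠ 0 := Nat.cast_ne_zero.mpr hq'.ne'
  have hcancel : ∀ x : ℕ,
      (2 * (Real.pi : ℂ) * Complex.I *
        ((((ρ : ℤ) * A) * (x : ℤ) ^ 2 + (x : ℤ) * ((ρ : ℤ) * L) : ℤ) : ℂ) / ((ρ * q' : ℕ) : ℂ))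
      = (2 * (Real.pi : ℂ) * Complex.I *
        ((A * (x : ℤ) ^ 2 + (x : ℤ) * L : ℤ) : ℂ) / ((q' : ℕ) : ℂ)) := by
    intro x
    push_cast
    field_simp
  simp only [hcancel]
  set g : ℕ → ℂ := fun x => Complex.exp (2 * (Real.pi : ℂ) * Complex.I *
        ((A * (x : ℤ) ^ 2 + (x : ℤ) * L : ℤ) : ℂ) / ((q' : ℕ) : ℂ)) with hg
  have hper : ∀ x, g (x + q') = g x := by
    intro x
    have harg : 2 * (Real.pi : ℂ) * Complex.I *
        ((A * ((x + q' : ℕ) : ℤ) ^ 2 + ((x + q' : ℕ) : ℤ) * L : ℤ) : ℂ) / ((q' : ℕ) : ℂ)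
        = 2 * (Real.pi : ℂ) * Complex.I *
          ((A * (x : ℤ) ^ 2 + (x : ℤ) * L : ℤ) : ℂ) / ((q' : ℕ) : ℂ)
          + ((A * (2 * x + q') + L : ℤ) : ℂ) * (2 * (Real.pi : ℂ) * Complex.I) := by
      push_cast
      field_simp
      ring
    rw [hg]
    simp only
    rw [harg, Complex.exp_add, Complex.exp_int_mul_two_pi_mul_I, mul_one]
  rw [sum_periodic g q' ρ hper, nsmul_eq_mul]

theorem stmt_12 (d Q : ℕ) (hQ : 1 ≤ Q) (a : ℕ) (ha : a < Q) (ℓ : Fin d → ℤ)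
    (ρ : ℕ) (hρ : ρ = Nat.gcd (Nat.gcd a (Finset.univ.gcd fun i => (ℓ i).natAbs)) Q) :
    normGaussSum d Q (a : ℤ) ℓ =
      normGaussSum d (Q / ρ) ((a : ℤ) / (ρ : ℤ)) (fun i => ℓ i / (ρ : ℤ)) := by
  have hρQ : ρ ∣ Q := hρ ▸ Nat.gcd_dvd_right _ _
  have hρpos : 0 < ρ := Nat.pos_of_dvd_of_pos hρQ hQ
  have hρa : (ρ : ℤ) ∣ (a : ℤ) :=
    Int.natCast_dvd_natCast.mpr (hρ ▸ ((Nat.gcd_dvd_left _ _).trans (Nat.gcd_dvd_left _ _)))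
  have hρL : ∀ i, (ρ : ℤ) ∣ ℓ i := by
    intro i
    refine dvd_trans (Int.natCast_dvd_natCast.mpr
      (hρ ▸ ((Nat.gcd_dvd_left _ _).trans ((Nat.gcd_dvd_right _ _).trans
        (Finset.gcd_dvd (Finset.mem_univ i)))))) (Int.natAbs_dvd.mpr dvd_rfl)
  set q' : ℕ := Q / ρ with hq'def
  have hQeq : Q = ρ * q' := (Nat.mul_div_cancel' hρQ).symm
  have hq'pos : 0 < q' := Nat.div_pos (Nat.le_of_dvd (by omega) hρQ) hρpos
  set A' : ℤ := (a : ℤ) / (ρ : ℤ) with hA'def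
  have haeq : (a : ℤ) = (ρ : ℤ) * A' := (Int.mul_ediv_cancel' hρa).symm
  set L' : Fin d → ℤ := fun i => ℓ i / (ρ : ℤ) with hL'def
  have hLeq : ∀ i, ℓ i = (ρ : ℤ) * L' i := fun i => (Int.mul_ediv_cancel' (hρL i)).symm
  have hρC : (ρ : ℂ) ≠ 0 := Nat.cast_ne_zero.mpr hρpos.ne'
  have hq'C : (q' : ℂ) ≠ 0 := Nat.cast_ne_zero.mpr hq'pos.ne'
  rw [normGaussSum, normGaussSum, gauss_prod, gauss_prod]
  have hsum : ∀ i : Fin d,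
      (∑ x ∈ Finset.range Q,
        Complex.exp (2 * (Real.pi : ℂ) * Complex.I *
          ((((a : ℤ)) * (x : ℤ) ^ 2 + (x : ℤ) * ℓ i : ℤ) : ℂ) / (Q : ℂ)))
      = (ρ : ℂ) * ∑ x ∈ Finset.range q',
        Complex.exp (2 * (Real.pi : ℂ) * Complex.I *
          ((A' * (x : ℤ) ^ 2 + (x : ℤ) * L' i : ℤ) : ℂ) / ((q' : ℕ) : ℂ)) := by
    intro i
    rw [← sum_scale ρ q' hρpos hq'pos A' (L' i)]
    rw [hQeq]
    exact Finset.sum_congr rfl fun x _ => by rw [← haeq, ← hLeq]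
  rw [Finset.prod_congr rfl fun i _ => hsum i, Finset.prod_mul_distrib, Finset.prod_const,
    Finset.card_univ, Fintype.card_fin, hQeq, Nat.cast_mul, mul_pow, mul_inv]
  have hne : (ρ : ℂ) ^ d ≠ 0 := pow_ne_zero _ hρC
  field_simp
end
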